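/- arXiv:1705.00589 — 10 statements merged into one kernel-verified Lean document; each statement's English description precedes it below -/
import Mathlib

section
/- Let N be a positive integer and let Σ be a nonempty subset of the symmetric group S_N. Then there exists a positive integer ℓ such that Σ^ℓ is a group (i.e., it is the carrier of a subgroup of S_N). -/
open Pointwise

theorem aux_pow_closed {G : Type*} [Group G] {T : Set G} (hTT : T * T = T) :
    ∀ k : ℕ, 1 ≤ k → ∀ x ∈ T, x ^ k ∈ T := by
  intro k hk
  induction k with
  | zero => omega
  | succ n ih =>
    intro x hx
    rcases Nat.eq_or_lt_of_le hk with h | h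
    · obtain rfl : n = 0 := by omega
      simpa using hx
    · have hn : 1 ≤ n := by omega
      have : x ^ n * x ∈ T * T := Set.mul_mem_mul (ih hn x hx) hx
      rw [hTT] at this
      simpa [pow_succ] using this

/-- Lemma (iii): for any nonempty subset Σ of S_N there is a positive ℓ such that Σ^ℓ
is the carrier of a subgroup. -/
theorem stmt_2 (N : ℕ) (hN : 0 < N) (S : Set (Equiv.Perm (Fin N))) (hS : S.Nonempty) :
    ∃ ℓ : ℕ, 0 < ℓ ∧
      ∃ H : Subgroup (Equiv.Perm (Fin N)), S ^ ℓ = (H : Set (Equiv.Perm (Fin N))) := by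
  -- pigeonhole: the map m ↦ S^(m+1) is not injective
  obtain ⟨a, b, hab, heq⟩ : ∃ a b : ℕ, a ≠ b ∧ S ^ (a + 1) = S ^ (b + 1) :=
    Finite.exists_ne_map_eq_of_infinite (fun m : ℕ => S ^ (m + 1))
  wlog hlt : a < b generalizing a b
  · exact this b a hab.symm heq.symm (by omega)
  set d := b - a with hd
  have hd1 : 1 ≤ d := by omega
  have hstep : ∀ m : ℕ, a + 1 ≤ m → S ^ m = S ^ (m + d) := by
    intro m hm
    obtain ⟨r, rfl⟩ : ∃ r, m = (a + 1) + r := ⟨m - (a + 1), by omega⟩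
    have hb : b + 1 = a + 1 + d := by omega
    calc S ^ (a + 1 + r) = S ^ (a + 1) * S ^ r := pow_add S _ _
      _ = S ^ (b + 1) * S ^ r := by rw [heq]
      _ = S ^ (a + 1 + d) * S ^ r := by rw [hb]
      _ = S ^ (a + 1 + r + d) := by rw [← pow_add]; ring_nf
  have hsteps : ∀ t : ℕ, ∀ m : ℕ, a + 1 ≤ m → S ^ m = S ^ (m + t * d) := by
    intro t
    induction t with
    | zero => simp
    | succ n ih =>
      intro m hm
      rw [ih m hm, hstep (m + n * d) (by omega)]
      ring_nf
  set ℓ := (a + 1) * d with hℓ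
  have hℓpos : 0 < ℓ := by positivity
  have hℓge : a + 1 ≤ ℓ := Nat.le_mul_of_pos_right _ hd1
  have hTT : S ^ ℓ * S ^ ℓ = S ^ ℓ := by
    rw [← pow_add]
    exact (hsteps (a + 1) ℓ hℓge).symm
  set T := S ^ ℓ with hT
  have hTne : T.Nonempty := hS.pow
  obtain ⟨x₀, hx₀⟩ := hTne
  have hpow := aux_pow_closed hTT
  have hone : (1 : Equiv.Perm (Fin N)) ∈ T := by
    have ho : 0 < orderOf x₀ := orderOf_pos x₀
    have := hpow (orderOf x₀) ho x₀ hx₀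
    rwa [pow_orderOf_eq_one] at this
  have hinv : ∀ x ∈ T, x⁻¹ ∈ T := by
    intro x hx
    have ho : 0 < orderOf x := orderOf_pos x
    rcases Nat.eq_or_lt_of_le ho with h | h
    · have hx1 : x = 1 := orderOf_eq_one_iff.mp h.symm
      simpa [hx1] using hone
    · have h1 : x ^ (orderOf x - 1) * x = 1 := by
        rw [← pow_succ, Nat.sub_add_cancel ho, pow_orderOf_eq_one]
      have h2 : x⁻¹ = x ^ (orderOf x - 1) := inv_eq_of_mul_eq_one_left h1
      rw [h2]
      exact hpow (orderOf x - 1) (by omega) x hx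
  refine ⟨ℓ, hℓpos, ⟨⟨⟨⟨T, ?_⟩, hone⟩, fun {x} hx => hinv x hx⟩, rfl⟩⟩
  intro x y hx hy
  have : x * y ∈ T * T := Set.mul_mem_mul hx hy
  rwa [hTT] at this
end

section
/- Let N be a positive integer and let Σ be a nonempty subset of the symmetric group S_N, with signature s and period p. If p divides s, then Σ^s = ⟨Σ^p⟩, the subgroup of S_N generated by Σ^p. -/
open Pointwise

lemma pow_subset_closure_aux {G : Type*} [Group G] (T : Set G) (k : ℕ) :
    T ^ k ⊆ (Subgroup.closure T : Set G) := by
  induction k with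
  | zero =>
      simp only [pow_zero]
      intro x hx
      rw [Set.mem_one] at hx
      rw [hx]; exact (Subgroup.closure T).one_mem
  | succ n ih =>
      rw [pow_succ]
      intro x hx
      obtain ⟨a, ha, b, hb, rfl⟩ := hx
      exact (Subgroup.closure T).mul_mem (ih ha) (Subgroup.subset_closure hb)

/-- Proposition 1: if the period p divides the signature s, then Σ^s = ⟨Σ^p⟩. -/
theorem stmt_5 (N : ℕ) (hN : 0 < N) (S : Set (Equiv.Perm (Fin N))) (hS : S.Nonempty)
    (s p : ℕ)
    (hsig : IsLeast {m : ℕ | 0 < m ∧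
      ∃ H : Subgroup (Equiv.Perm (Fin N)), S ^ m = (H : Set (Equiv.Perm (Fin N)))} s)
    (hper : IsLeast {q : ℕ | 0 < q ∧ S ^ (s + q) = S ^ s} p)
    (hdvd : p ∣ s) :
    S ^ s = (Subgroup.closure (S ^ p) : Set (Equiv.Perm (Fin N))) := by
  obtain ⟨⟨hs0, H, hH⟩, _⟩ := hsig
  obtain ⟨⟨hp0, hper'⟩, _⟩ := hper
  have hone : (1 : Equiv.Perm (Fin N)) ∈ S ^ s := by rw [hH]; exact H.one_mem
  have hps : S ^ p ⊆ S ^ s := by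
    intro x hx
    have : x * 1 ∈ S ^ p * S ^ s := Set.mul_mem_mul hx hone
    rw [← pow_add, add_comm, hper'] at this
    simpa using this
  obtain ⟨k, rfl⟩ := hdvd
  apply Set.Subset.antisymm
  · rw [pow_mul]
    exact pow_subset_closure_aux _ k
  · have hle : Subgroup.closure (S ^ p) ≤ H :=
      (Subgroup.closure_le H).mpr (by rw [← hH]; exact hps)
    intro x hx
    rw [hH]
    exact hle hx
end

section
/- Let N be a positive integer and let Σ be a nonempty subset of the symmetric group S_N, with signature s and period p. Then the following are equivalent: (i) p = 1; (ii) Σ^s = ⟨Σ⟩ (the subgroup generated by Σ); (iii) Σ ⊆ Σ^s; (iv) Σ^k = Σ^s for all integers k ≥ s; (v) there exists a positive integer ℓ such that Σ^ℓ ⊆ Σ^{ℓ+1}. -/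
open Pointwise

/-- Theorem 2: equivalent characterizations of period 1 (convergence of concatenation). -/
theorem stmt_6 (N : ℕ) (hN : 0 < N) (S : Set (Equiv.Perm (Fin N))) (hS : S.Nonempty)
    (s p : ℕ)
    (hsig : IsLeast {m : ℕ | 0 < m ∧
      ∃ H : Subgroup (Equiv.Perm (Fin N)), S ^ m = (H : Set (Equiv.Perm (Fin N)))} s)
    (hper : IsLeast {q : ℕ | 0 < q ∧ S ^ (s + q) = S ^ s} p) :
    [p = 1,
     S ^ s = (Subgroup.closure S : Set (Equiv.Perm (Fin N))),
     S ⊆ S ^ s,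
     ∀ k : ℕ, s ≤ k → S ^ k = S ^ s,
     ∃ ℓ : ℕ, 0 < ℓ ∧ S ^ ℓ ⊆ S ^ (ℓ + 1)].TFAE := by
  obtain ⟨⟨hs0, H, hH⟩, hsmin⟩ := hsig
  obtain ⟨⟨hp0, hpp⟩, hpmin⟩ := hper
  have hpowne : ∀ n : ℕ, (S ^ n).Nonempty := by
    intro n
    induction n with
    | zero => exact ⟨1, by simp [Set.mem_one]⟩
    | succ n ih => rw [pow_succ]; exact ih.mul hS
  have hmem : ∀ x, x ∈ S ^ s ↔ x ∈ H := fun x => by rw [hH]; exact Iff.rfl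
  -- periodicity at any k ≥ s
  have hper' : ∀ k, s ≤ k → S ^ (k + p) = S ^ k := by
    intro k hk
    obtain ⟨d, rfl⟩ := Nat.exists_eq_add_of_le hk
    rw [show s + d + p = (s + p) + d by ring, pow_add, hpp, ← pow_add]
  have hmper : ∀ t k, s ≤ k → S ^ (k + t * p) = S ^ k := by
    intro t
    induction t with
    | zero => intro k _; simp
    | succ t ih =>
      intro k hk
      rw [show k + (t + 1) * p = (k + t * p) + p by ring,
        hper' (k + t * p) (le_trans hk (Nat.le_add_right _ _)), ih k hk]
  tfae_have 1 → 4 := by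
    intro h1 k hk
    subst h1
    induction k, hk using Nat.le_induction with
    | base => rfl
    | succ k hk ih =>
      rw [pow_succ, ih, ← pow_succ]
      simpa using hpp
  tfae_have 4 → 3 := by
    intro h4 σ hσ
    obtain ⟨τ, hτ⟩ := hpowne s
    have h1 : τ * σ ∈ S ^ (s + 1) := by
      rw [pow_succ]; exact Set.mul_mem_mul hτ hσ
    rw [h4 (s + 1) (Nat.le_succ s)] at h1
    have : σ = τ⁻¹ * (τ * σ) := by group
    rw [hmem] at h1 hτ ⊢
    rw [this]
    exact H.mul_mem (H.inv_mem hτ) h1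
  tfae_have 3 → 2 := by
    intro h3
    apply Set.Subset.antisymm
    · have : ∀ n : ℕ, 0 < n → S ^ n ⊆ (Subgroup.closure S : Set (Equiv.Perm (Fin N))) := by
        intro n hn
        induction n with
        | zero => omega
        | succ n ih =>
          rcases Nat.eq_zero_or_pos n with h | h
          · subst h; rw [zero_add, pow_one]; exact Subgroup.subset_closure
          · rw [pow_succ]
            intro x hx
            obtain ⟨a, ha, b, hb, rfl⟩ := hx
            exact (Subgroup.closure S).mul_mem (ih h ha) (Subgroup.subset_closure hb)
      exact this s hs0
    · have hle : Subgroup.closure S ≤ H := by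
        rw [Subgroup.closure_le]
        intro x hx
        exact (hmem x).mp (h3 hx)
      rw [hH]
      exact hle
  tfae_have 2 → 3 := by
    intro h2
    rw [h2]
    exact Subgroup.subset_closure
  tfae_have 3 → 5 := by
    intro h3
    refine ⟨s, hs0, ?_⟩
    intro x hx
    obtain ⟨σ, hσ⟩ := hS
    have hσH : σ ∈ H := (hmem σ).mp (h3 hσ)
    have hx' : x * σ⁻¹ ∈ S ^ s :=
      (hmem _).mpr (H.mul_mem ((hmem x).mp hx) (H.inv_mem hσH))
    have : x = (x * σ⁻¹) * σ := by group
    rw [this, pow_succ]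
    exact Set.mul_mem_mul hx' hσ
  tfae_have 5 → 1 := by
    rintro ⟨ℓ, hℓ0, hℓ⟩
    -- chain: for ℓ ≤ a ≤ b, S^a ⊆ S^b
    have hstep : ∀ a, ℓ ≤ a → S ^ a ⊆ S ^ (a + 1) := by
      intro a ha
      obtain ⟨d, rfl⟩ := Nat.exists_eq_add_of_le ha
      rw [show ℓ + d + 1 = (ℓ + 1) + d by ring, pow_add, pow_add]
      exact Set.mul_subset_mul_right hℓ
    have hchain : ∀ a b, ℓ ≤ a → a ≤ b → S ^ a ⊆ S ^ b := by
      intro a b ha hab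
      induction b, hab using Nat.le_induction with
      | base => exact subset_rfl
      | succ b hb ih => exact ih.trans (hstep b (le_trans ha hb))
    have h1 : S ^ (s + 1) = S ^ s := by
      have hM : ℓ ≤ s + ℓ * p := le_trans (Nat.le_mul_of_pos_right ℓ hp0) (Nat.le_add_left _ _)
      have e1 : S ^ (s + ℓ * p) = S ^ s := hmper ℓ s le_rfl
      have e2 : S ^ (s + 1 + ℓ * p) = S ^ (s + 1) := hmper ℓ (s + 1) (Nat.le_succ s)
      have sub1 : S ^ (s + ℓ * p) ⊆ S ^ (s + 1 + ℓ * p) :=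
        hchain _ _ hM (by omega)
      have sub2 : S ^ (s + 1 + ℓ * p) ⊆ S ^ (s + ℓ * p + p) :=
        hchain _ _ (by omega) (by omega)
      have e3 : S ^ (s + ℓ * p + p) = S ^ (s + ℓ * p) :=
        hper' _ (Nat.le_add_right _ _)
      have : S ^ (s + 1) = S ^ s := by
        rw [← e1, ← e2]
        exact Set.Subset.antisymm (e3 ▸ sub2) sub1
      exact this
    have : p ≤ 1 := hpmin ⟨Nat.one_pos, h1⟩
    omega
  tfae_finish
end

section
/- Let N be a positive integer and let Σ be a nonempty subset of the symmetric group S_N, with signature s and period p. If every element of Σ is an odd permutation (i.e., has sign −1), then both s and p are even. -/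
open Pointwise

/-- Proposition 3: if Σ consists only of odd permutations then its signature and period
are both even. -/
theorem stmt_8 (N : ℕ) (hN : 0 < N) (S : Set (Equiv.Perm (Fin N))) (hS : S.Nonempty)
    (s p : ℕ)
    (hsig : IsLeast {m : ℕ | 0 < m ∧
      ∃ H : Subgroup (Equiv.Perm (Fin N)), S ^ m = (H : Set (Equiv.Perm (Fin N)))} s)
    (hper : IsLeast {q : ℕ | 0 < q ∧ S ^ (s + q) = S ^ s} p)
    (hodd : ∀ σ ∈ S, Equiv.Perm.sign σ = -1) :
    Even s ∧ Even p := by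
  have key : ∀ m : ℕ, ∀ σ ∈ S ^ (m + 1), Equiv.Perm.sign σ = (-1) ^ (m + 1) := by
    intro m
    induction m with
    | zero =>
      intro σ hσ
      rw [pow_one] at hσ
      simpa using hodd σ hσ
    | succ n ih =>
      intro σ hσ
      rw [pow_succ] at hσ
      rcases hσ with ⟨a, ha, b, hb, rfl⟩
      rw [map_mul, ih a ha, hodd b hb, ← pow_succ]
  have hne : (-1 : ℤˣ) ≠ 1 := by decide
  obtain ⟨⟨hs_pos, H, hH⟩, -⟩ := hsig
  obtain ⟨s', rfl⟩ : ∃ s', s = s' + 1 := ⟨s - 1, by omega⟩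
  have h1 : (1 : Equiv.Perm (Fin N)) ∈ S ^ (s' + 1) := hH ▸ H.one_mem
  have hs_even : Even (s' + 1) := by
    rw [← neg_one_pow_eq_one_iff_even hne, ← key s' 1 h1, map_one]
  refine ⟨hs_even, ?_⟩
  obtain ⟨⟨hp_pos, hper'⟩, -⟩ := hper
  obtain ⟨p', rfl⟩ : ∃ p', p = p' + 1 := ⟨p - 1, by omega⟩
  obtain ⟨σ, hσ⟩ : (S ^ (s' + 1)).Nonempty := hS.pow
  have h2 : σ ∈ S ^ (s' + 1 + (p' + 1)) := hper' ▸ hσ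
  have e1 := key s' σ hσ
  have e2 := key (s' + p' + 1) σ (by convert h2 using 2; ring)
  rw [e1] at e2
  rw [← neg_one_pow_eq_one_iff_even hne]
  have : ((-1 : ℤˣ)) ^ (s' + 1) * (-1) ^ (p' + 1) = (-1) ^ (s' + 1) * 1 := by
    rw [← pow_add]
    rw [mul_one, show s' + 1 + (p' + 1) = s' + p' + 1 + 1 by ring]
    exact e2.symm
  exact mul_left_cancel this
end

section
/- In the symmetric group S_5, let σ be the transposition (1 2) and τ the 3-cycle (3 4 5), and set Σ := {σ, τ}. Then Σ has signature 5 and period 1, yet the identity permutation does not belong to Σ. (This shows the converse of the statement 'ι ∈ Σ implies period 1' fails.) -/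
open Pointwise

set_option maxRecDepth 100000

private def T : Finset (Equiv.Perm (Fin 5)) :=
  {Equiv.swap 0 1, Equiv.swap 2 3 * Equiv.swap 3 4}

private lemma keyT (m : ℕ) (H : Subgroup (Equiv.Perm (Fin 5)))
    (h : (↑(T ^ m) : Set (Equiv.Perm (Fin 5))) = ↑H) :
    ∀ a ∈ T ^ m, ∀ b ∈ T ^ m, a * b ∈ T ^ m := by
  intro a ha b hb
  have ha' : a ∈ H := by rw [← SetLike.mem_coe, ← h]; exact Finset.mem_coe.2 ha
  have hb' : b ∈ H := by rw [← SetLike.mem_coe, ← h]; exact Finset.mem_coe.2 hb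
  have : a * b ∈ (↑(T ^ m) : Set (Equiv.Perm (Fin 5))) := by
    rw [h]; exact H.mul_mem ha' hb'
  exact Finset.mem_coe.1 this

private lemma hmul5 : ∀ a ∈ T ^ 5, ∀ b ∈ T ^ 5, a * b ∈ T ^ 5 := by decide
private lemma hone5 : (1 : Equiv.Perm (Fin 5)) ∈ T ^ 5 := by decide
private lemma hinv5 : ∀ a ∈ T ^ 5, a⁻¹ ∈ T ^ 5 := by decide

private def H5 : Subgroup (Equiv.Perm (Fin 5)) where
  carrier := ↑(T ^ 5)
  mul_mem' := fun ha hb => hmul5 _ ha _ hb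
  one_mem' := hone5
  inv_mem' := fun ha => hinv5 _ ha

/-- In S_5, with σ = (1 2) and τ = (3 4 5) (on {1,…,5}, i.e. 0-indexed: σ = swap 0 1 and
τ the 3-cycle 2 ↦ 3 ↦ 4 ↦ 2), the set Σ = {σ, τ} has signature 5 and period 1, yet does
not contain the identity. -/
theorem stmt_9 (σ τ : Equiv.Perm (Fin 5))
    (hσ : σ = Equiv.swap 0 1)
    (hτ : τ = Equiv.swap 2 3 * Equiv.swap 3 4)
    (S : Set (Equiv.Perm (Fin 5))) (hS : S = {σ, τ}) :
    IsLeast {m : ℕ | 0 < m ∧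
      ∃ H : Subgroup (Equiv.Perm (Fin 5)), S ^ m = (H : Set (Equiv.Perm (Fin 5)))} 5 ∧
    IsLeast {q : ℕ | 0 < q ∧ S ^ (5 + q) = S ^ 5} 1 ∧
    (1 : Equiv.Perm (Fin 5)) ∉ S := by
  subst hσ hτ hS
  have hST : ({Equiv.swap 0 1, Equiv.swap 2 3 * Equiv.swap 3 4} :
      Set (Equiv.Perm (Fin 5))) = ↑T := by simp [T]
  rw [hST]
  refine ⟨⟨⟨by norm_num, H5, ?_⟩, ?_⟩, ⟨⟨one_pos, ?_⟩, fun q hq => hq.1⟩, ?_⟩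
  · rw [← Finset.coe_pow]; rfl
  · rintro m ⟨hm, H, hH⟩
    rw [← Finset.coe_pow] at hH
    by_contra hlt
    push_neg at hlt
    interval_cases m
    · have := keyT 1 H hH; revert this; decide
    · have := keyT 2 H hH; revert this; decide
    · have := keyT 3 H hH; revert this; decide
    · have := keyT 4 H hH; revert this; decide
  · rw [← Finset.coe_pow, ← Finset.coe_pow]
    norm_cast
  · intro h
    exact absurd (Finset.mem_coe.1 h) (by decide)
end

section
/- In the symmetric group S_4, let σ be the transposition (1 2) and τ the transposition (3 4), and set Σ := {σ, στ}. Then Σ has signature 2 and period 2, while Σ contains the even permutation στ. (This shows the converse of the statement 'Σ consisting only of odd permutations implies s and p even' fails.) -/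
open Pointwise

private lemma pair_mul_pair {G : Type*} [Monoid G] (a b c d : G) :
    ({a, b} : Set G) * {c, d} = {a * c, a * d, b * c, b * d} := by
  ext x
  simp only [Set.mem_mul, Set.mem_insert_iff, Set.mem_singleton_iff]
  constructor
  · rintro ⟨y, (rfl | rfl), z, (rfl | rfl), rfl⟩ <;> tauto
  · rintro (rfl | rfl | rfl | rfl)
    exacts [⟨a, Or.inl rfl, c, Or.inl rfl, rfl⟩,
      ⟨a, Or.inl rfl, d, Or.inr rfl, rfl⟩,
      ⟨b, Or.inr rfl, c, Or.inl rfl, rfl⟩,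
      ⟨b, Or.inr rfl, d, Or.inr rfl, rfl⟩]

private def Hgrp : Subgroup (Equiv.Perm (Fin 4)) where
  carrier := {1, Equiv.swap 2 3}
  one_mem' := Or.inl rfl
  mul_mem' := by
    intro a b ha hb
    simp only [Set.mem_insert_iff, Set.mem_singleton_iff] at *
    rcases ha with rfl | rfl <;> rcases hb with rfl | rfl <;> simp <;> decide
  inv_mem' := by
    intro a ha
    simp only [Set.mem_insert_iff, Set.mem_singleton_iff] at *
    rcases ha with rfl | rfl <;> simp <;> decide

/-- In S_4, with σ = (1 2) and τ = (3 4) disjoint transpositions (0-indexed: σ = swap 0 1,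
τ = swap 2 3), the set Σ = {σ, στ} has signature 2 and period 2, while στ is even. -/
theorem stmt_10 (σ τ : Equiv.Perm (Fin 4))
    (hσ : σ = Equiv.swap 0 1)
    (hτ : τ = Equiv.swap 2 3)
    (S : Set (Equiv.Perm (Fin 4))) (hS : S = {σ, σ * τ}) :
    IsLeast {m : ℕ | 0 < m ∧
      ∃ H : Subgroup (Equiv.Perm (Fin 4)), S ^ m = (H : Set (Equiv.Perm (Fin 4)))} 2 ∧
    IsLeast {q : ℕ | 0 < q ∧ S ^ (2 + q) = S ^ 2} 2 ∧
    Equiv.Perm.sign (σ * τ) = 1 := by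
  subst hσ hτ hS
  set a : Equiv.Perm (Fin 4) := Equiv.swap 0 1 with ha
  set t : Equiv.Perm (Fin 4) := Equiv.swap 2 3 with ht
  have hS2 : ({a, a * t} : Set (Equiv.Perm (Fin 4))) ^ 2 = {1, t} := by
    rw [pow_two, pair_mul_pair]
    have h1 : a * a = 1 := by decide
    have h2 : a * (a * t) = t := by decide
    have h3 : a * t * a = t := by decide
    have h4 : a * t * (a * t) = 1 := by decide
    rw [h1, h2, h3, h4]
    ext x
    simp only [Set.mem_insert_iff, Set.mem_singleton_iff]
    tauto
  have hS3 : ({a, a * t} : Set (Equiv.Perm (Fin 4))) ^ 3 = {a, a * t} := by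
    rw [pow_succ, hS2, pair_mul_pair]
    have h1 : (1 : Equiv.Perm (Fin 4)) * a = a := one_mul a
    have h2 : (1 : Equiv.Perm (Fin 4)) * (a * t) = a * t := one_mul _
    have h3 : t * a = a * t := by decide
    have h4 : t * (a * t) = a := by decide
    rw [h1, h2, h3, h4]
    ext x
    simp only [Set.mem_insert_iff, Set.mem_singleton_iff]
    tauto
  have hS4 : ({a, a * t} : Set (Equiv.Perm (Fin 4))) ^ 4 = {1, t} := by
    have : ({a, a * t} : Set (Equiv.Perm (Fin 4))) ^ 4 = {a, a * t} ^ 3 * {a, a * t} :=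
      pow_succ _ 3
    rw [this, hS3, ← pow_two, hS2]
  have hone : (1 : Equiv.Perm (Fin 4)) ∉ ({a, a * t} : Set (Equiv.Perm (Fin 4))) := by
    simp only [Set.mem_insert_iff, Set.mem_singleton_iff]
    push_neg
    constructor <;> decide
  refine ⟨⟨⟨by norm_num, ⟨Hgrp, by rw [hS2]; rfl⟩⟩, ?_⟩,
    ⟨⟨by norm_num, by rw [show (2:ℕ)+2 = 4 from rfl, hS4, hS2]⟩, ?_⟩, by decide⟩
  · rintro m ⟨hm, H, hH⟩
    by_contra h
    interval_cases m
    · simp only [pow_one] at hH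
      exact hone (hH ▸ H.one_mem)
  · rintro q ⟨hq, hH⟩
    by_contra h
    interval_cases q
    · rw [show (2:ℕ)+1 = 3 from rfl, hS3, hS2] at hH
      have : (1 : Equiv.Perm (Fin 4)) ∈ ({a, a * t} : Set (Equiv.Perm (Fin 4))) := by
        rw [hH]; exact Or.inl rfl
      exact hone this
end

section
/- Let N be a positive integer and let Σ be a nonempty subset of the symmetric group S_N with period p. Then p = 1 if and only if the greatest common divisor of the set {n : n is a positive integer and the identity permutation ι lies in Σ^n} equals 1. (These n are exactly the lengths of directed cycles through the identity in the Cayley graph of ⟨Σ⟩ generated by Σ, so this is the statement that concatenation converges precisely when the Cayley graph is aperiodic.) -/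
open Pointwise

/-- Theorem 3 (aperiodicity of the Cayley graph): the period p equals 1 precisely when the
greatest common divisor of the return times {n > 0 : ι ∈ Σ^n} (the lengths of directed
cycles through the identity in the Cayley graph of ⟨Σ⟩) is 1; in ℕ, the gcd of a set A is 1
iff every common divisor of A equals 1. -/
theorem stmt_13 (N : ℕ) (hN : 0 < N) (S : Set (Equiv.Perm (Fin N))) (hS : S.Nonempty)
    (s p : ℕ)
    (hsig : IsLeast {m : ℕ | 0 < m ∧
      ∃ H : Subgroup (Equiv.Perm (Fin N)), S ^ m = (H : Set (Equiv.Perm (Fin N)))} s)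
    (hper : IsLeast {q : ℕ | 0 < q ∧ S ^ (s + q) = S ^ s} p) :
    p = 1 ↔
      ∀ d : ℕ, (∀ n : ℕ, 0 < n → (1 : Equiv.Perm (Fin N)) ∈ S ^ n → d ∣ n) → d = 1 := by
  classical
  obtain ⟨⟨hs_pos, H, hH⟩, hs_min⟩ := hsig
  obtain ⟨⟨hp_pos, hpS⟩, hp_min⟩ := hper
  obtain ⟨σ, hσ⟩ := hS
  -- right coset relation: elements of S are all in the same right coset of H
  have keyR : ∀ τ ∈ S, ∀ υ ∈ S, τ * υ⁻¹ ∈ H := by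
    intro τ hτ υ hυ
    have h1 : τ * υ ^ (s - 1) ∈ H := by
      have h : τ * υ ^ (s - 1) ∈ S ^ (1 + (s - 1)) := by
        rw [pow_add, pow_one]
        exact Set.mul_mem_mul hτ (Set.pow_mem_pow hυ)
      rw [show 1 + (s - 1) = s by omega, hH] at h
      exact h
    have h2 : υ ^ s ∈ H := by
      have h : υ ^ s ∈ S ^ s := Set.pow_mem_pow hυ
      rwa [hH] at h
    rw [show s = (s - 1) + 1 by omega] at h2
    have he : τ * υ⁻¹ = (τ * υ ^ (s - 1)) * (υ ^ (s - 1 + 1))⁻¹ := by group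
    rw [he]
    exact mul_mem h1 (inv_mem h2)
  -- every element of S normalizes H
  have keyN : ∀ υ ∈ S, ∀ h ∈ H, υ * h * υ⁻¹ ∈ H := by
    intro υ hυ h hh
    have h1 : υ * h ∈ S ^ (s + 1) := by
      rw [pow_succ']
      exact Set.mul_mem_mul hυ (by rw [hH]; exact hh)
    rw [pow_succ] at h1
    obtain ⟨y, hy, τ, hτ, hyτ⟩ := h1
    have hyτ' : y * τ = υ * h := hyτ
    rw [hH] at hy
    have he : υ * h * υ⁻¹ = y * (τ * υ⁻¹) := by
      rw [← mul_assoc, hyτ']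
    rw [he]
    exact mul_mem hy (keyR τ hτ υ hυ)
  -- powers of σ normalize H
  have keyN' : ∀ n : ℕ, ∀ h ∈ H, σ ^ n * h * (σ ^ n)⁻¹ ∈ H := by
    intro n
    induction n with
    | zero => intro h hh; simpa using hh
    | succ n ih =>
      intro h hh
      have he : σ ^ (n + 1) * h * (σ ^ (n + 1))⁻¹
          = σ * (σ ^ n * h * (σ ^ n)⁻¹) * σ⁻¹ := by
        rw [pow_succ']
        group
      rw [he]
      exact keyN σ hσ _ (ih h hh)
  -- elements of S^n lie in the right coset H σ^n
  have keyM : ∀ n : ℕ, ∀ x ∈ S ^ n, x * (σ ^ n)⁻¹ ∈ H := by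
    intro n
    induction n with
    | zero =>
      intro x hx
      simp only [pow_zero, Set.mem_one] at hx
      subst hx
      simpa using H.one_mem
    | succ n ih =>
      intro x hx
      rw [pow_succ] at hx
      obtain ⟨y, hy, τ, hτ, hyτ⟩ := hx
      have hyτ' : y * τ = x := hyτ
      have he : x * (σ ^ (n + 1))⁻¹
          = (y * (σ ^ n)⁻¹) * (σ ^ n * (τ * σ⁻¹) * (σ ^ n)⁻¹) := by
        rw [← hyτ', pow_succ]
        group
      rw [he]
      exact mul_mem (ih y hy) (keyN' n _ (keyR τ hτ σ hσ))
  have hσs : σ ^ s ∈ H := by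
    have h : σ ^ s ∈ S ^ s := Set.pow_mem_pow hσ
    rwa [hH] at h
  have h_ex : ∃ n : ℕ, 0 < n ∧ σ ^ n ∈ H := ⟨s, hs_pos, hσs⟩
  set d := Nat.find h_ex with hdDef
  obtain ⟨hd_pos, hdH⟩ := Nat.find_spec h_ex
  have hdvd : ∀ n : ℕ, σ ^ n ∈ H → d ∣ n := by
    intro n
    induction n using Nat.strong_induction_on with
    | _ n ih =>
      intro hn
      rcases Nat.eq_zero_or_pos n with h0 | hpos
      · simp [h0]
      · have hdn : d ≤ n := Nat.find_min' h_ex ⟨hpos, hn⟩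
        have hsub : σ ^ (n - d) ∈ H := by
          have he : σ ^ (n - d) = σ ^ n * (σ ^ d)⁻¹ := by
            rw [eq_mul_inv_iff_mul_eq, ← pow_add, Nat.sub_add_cancel hdn]
          rw [he]
          exact mul_mem hn (inv_mem hdH)
        have := ih (n - d) (by omega) hsub
        have h2 : d ∣ (n - d) + d := Nat.dvd_add this dvd_rfl
        rwa [Nat.sub_add_cancel hdn] at h2
  constructor
  · intro hp1 d' hdall
    subst hp1
    have h1 : (1 : Equiv.Perm (Fin N)) ∈ S ^ s := by rw [hH]; exact H.one_mem
    have h2 : (1 : Equiv.Perm (Fin N)) ∈ S ^ (s + 1) := by rw [hpS]; exact h1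
    have d1 := hdall s hs_pos h1
    have d2 := hdall (s + 1) (by omega) h2
    have := Nat.dvd_sub d2 d1
    simpa using this
  · intro hd
    have hdall : ∀ n : ℕ, 0 < n → (1 : Equiv.Perm (Fin N)) ∈ S ^ n → d ∣ n := by
      intro n hn h1
      apply hdvd
      have := keyM n 1 h1
      rw [one_mul] at this
      simpa using inv_mem this
    have hd1 : d = 1 := hd d hdall
    have hσH : σ ∈ H := by
      have h := hdH
      rw [← hdDef, hd1, pow_one] at h
      exact h
    have hstep : S ^ (s + 1) = S ^ s := by
      ext x
      constructor
      · intro hx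
        rw [pow_succ] at hx
        obtain ⟨y, hy, τ, hτ, hyτ⟩ := hx
        have hyτ' : y * τ = x := hyτ
        rw [hH] at hy
        rw [hH]
        have he : x = (y * (τ * σ⁻¹)) * σ := by
          rw [← hyτ']; group
        rw [he]
        exact mul_mem (mul_mem hy (keyR τ hτ σ hσ)) hσH
      · intro hx
        rw [pow_succ']
        have he : x = σ * (σ⁻¹ * x) := by group
        rw [he]
        refine Set.mul_mem_mul hσ ?_
        rw [hH] at hx ⊢
        exact mul_mem (inv_mem hσH) hx
    have hle : p ≤ 1 := hp_min ⟨one_pos, hstep⟩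
    omega
end

section
/- Let N be a positive integer and let Σ be a nonempty subset of the symmetric group S_N with period p. For σ ∈ Σ let v_σ denote the order of σ (the smallest positive integer v with σ^v = ι). If gcd{v_σ : σ ∈ Σ} = 1, then p = 1. -/
open Pointwise

/-- Proposition 4: if the gcd of the orders of the elements of Σ is 1, then the period of
Σ is 1. -/
theorem stmt_14 (N : ℕ) (hN : 0 < N) (S : Set (Equiv.Perm (Fin N))) (hS : S.Nonempty)
    (s p : ℕ)
    (hsig : IsLeast {m : ℕ | 0 < m ∧
      ∃ H : Subgroup (Equiv.Perm (Fin N)), S ^ m = (H : Set (Equiv.Perm (Fin N)))} s)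
    (hper : IsLeast {q : ℕ | 0 < q ∧ S ^ (s + q) = S ^ s} p)
    (hgcd : ((Set.toFinite S).toFinset).gcd orderOf = 1) :
    p = 1 := by
  classical
  obtain ⟨⟨hs0, H, hH⟩, -⟩ := hsig
  obtain ⟨τ, hτ⟩ := hS
  have _hG : True := trivial
  -- H * H = H as sets
  have hHH : (H : Set (Equiv.Perm (Fin N))) * H = H := by
    ext x
    constructor
    · rintro ⟨a, ha, b, hb, rfl⟩
      exact H.mul_mem ha hb
    · intro hx
      exact ⟨x, hx, 1, H.one_mem, mul_one x⟩
  have L0 : ∀ k : ℕ, S ^ (s + s * k) = (H : Set (Equiv.Perm (Fin N))) := by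
    intro k
    induction k with
    | zero => simpa using hH
    | succ k ih =>
      have h : s + s * (k + 1) = (s + s * k) + s := by ring
      rw [h, pow_add, ih, hH, hHH]
  -- inverse as a positive power
  have hinv : ∀ g : Equiv.Perm (Fin N), g⁻¹ = g ^ (s * orderOf g - 1) := by
    intro g
    have hv : 0 < orderOf g := orderOf_pos g
    have h1 : 0 < s * orderOf g := Nat.mul_pos hs0 hv
    have h2 : g ^ (s * orderOf g - 1) * g = 1 := by
      rw [← pow_succ, Nat.sub_add_cancel h1, mul_comm s, pow_mul, pow_orderOf_eq_one, one_pow]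
    exact (eq_inv_of_mul_eq_one_left h2).symm
  -- key absorption lemmas
  have key : ∀ σ ∈ S, ∀ t ∈ S, ∀ h ∈ (H : Set (Equiv.Perm (Fin N))), σ * h * t⁻¹ ∈ (H : Set (Equiv.Perm (Fin N))) := by
    intro σ hσ t ht h hh
    have hh' : h ∈ S ^ s := by rw [hH]; exact hh
    have h1 : 0 < s * orderOf t := Nat.mul_pos hs0 (orderOf_pos t)
    have hmem : σ * h * t ^ (s * orderOf t - 1) ∈ S ^ (1 + s + (s * orderOf t - 1)) := by
      rw [pow_add, pow_add, pow_one]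
      exact Set.mul_mem_mul (Set.mul_mem_mul hσ hh') (Set.pow_mem_pow ht)
    have harith : 1 + s + (s * orderOf t - 1) = s + s * orderOf t := by omega
    rw [harith, L0] at hmem
    rwa [hinv t]
  have key2 : ∀ σ ∈ S, ∀ t ∈ S, ∀ h ∈ (H : Set (Equiv.Perm (Fin N))), t⁻¹ * h * σ ∈ (H : Set (Equiv.Perm (Fin N))) := by
    intro σ hσ t ht h hh
    have hh' : h ∈ S ^ s := by rw [hH]; exact hh
    have h1 : 0 < s * orderOf t := Nat.mul_pos hs0 (orderOf_pos t)
    have hmem : t ^ (s * orderOf t - 1) * h * σ ∈ S ^ ((s * orderOf t - 1) + s + 1) := by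
      rw [pow_add, pow_add, pow_one]
      exact Set.mul_mem_mul (Set.mul_mem_mul (Set.pow_mem_pow ht) hh') hσ
    have harith : (s * orderOf t - 1) + s + 1 = s + s * orderOf t := by omega
    rw [harith, L0] at hmem
    rwa [hinv t]
  -- S * H = H * {τ}
  have hSH : S * (H : Set (Equiv.Perm (Fin N))) = (H : Set (Equiv.Perm (Fin N))) * {τ} := by
    ext x
    constructor
    · rintro ⟨σ, hσ, h, hh, rfl⟩
      exact ⟨σ * h * τ⁻¹, key σ hσ τ hτ h hh, τ, rfl, by group⟩
    · rintro ⟨h, hh, t, ht, rfl⟩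
      rw [Set.mem_singleton_iff.mp ht]
      exact ⟨τ, hτ, τ⁻¹ * h * τ, key2 τ hτ τ hτ h hh, by group⟩
  -- S^(s+k) = H * {τ^k}
  have hP : ∀ k : ℕ, S ^ (s + k) = (H : Set (Equiv.Perm (Fin N))) * {τ ^ k} := by
    intro k
    induction k with
    | zero => simp [hH]
    | succ k ih =>
      have h : s + (k + 1) = (s + k) + 1 := rfl
      calc S ^ (s + (k + 1)) = S * S ^ (s + k) := by rw [h, pow_succ']
        _ = S * ((H : Set (Equiv.Perm (Fin N))) * {τ ^ k}) := by rw [ih]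
        _ = (S * (H : Set (Equiv.Perm (Fin N)))) * {τ ^ k} := by rw [mul_assoc]
        _ = ((H : Set (Equiv.Perm (Fin N))) * {τ}) * {τ ^ k} := by rw [hSH]
        _ = (H : Set (Equiv.Perm (Fin N))) * ({τ} * {τ ^ k}) := by rw [mul_assoc]
        _ = (H : Set (Equiv.Perm (Fin N))) * {τ ^ (k + 1)} := by
              rw [Set.singleton_mul_singleton, ← pow_succ']
  -- σ^k lies in the coset H τ^k
  have hcos : ∀ σ ∈ S, ∀ k : ℕ, σ ^ k * (τ ^ k)⁻¹ ∈ (H : Set (Equiv.Perm (Fin N))) := by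
    intro σ hσ k
    induction k with
    | zero => simpa using H.one_mem
    | succ k ih =>
      have h : σ ^ (k + 1) * (τ ^ (k + 1))⁻¹ = σ * (σ ^ k * (τ ^ k)⁻¹) * τ⁻¹ := by
        rw [pow_succ', pow_succ', mul_inv_rev]; group
      rw [h]
      exact key σ hσ τ hτ _ ih
  have hτv : ∀ σ ∈ S, τ ^ orderOf σ ∈ H := by
    intro σ hσ
    have h := hcos σ hσ (orderOf σ)
    rw [pow_orderOf_eq_one, one_mul, SetLike.mem_coe] at h
    exact H.inv_mem_iff.mp h
  -- τ^k ∈ H gives periodicity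
  have hiff1 : ∀ k : ℕ, τ ^ k ∈ H → S ^ (s + k) = S ^ s := by
    intro k hk
    rw [hP k, hH]
    ext x
    constructor
    · rintro ⟨h, hh, t, ht, rfl⟩
      rw [Set.mem_singleton_iff.mp ht]
      exact H.mul_mem hh hk
    · intro hx
      exact ⟨x * (τ ^ k)⁻¹, H.mul_mem hx (H.inv_mem hk), τ ^ k, rfl, by group⟩
  have hiff2 : ∀ k : ℕ, S ^ (s + k) = S ^ s → τ ^ k ∈ H := by
    intro k hk
    have h : τ ^ k ∈ (H : Set (Equiv.Perm (Fin N))) * {τ ^ k} := ⟨1, H.one_mem, τ ^ k, rfl, one_mul _⟩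
    rw [← hP k, hk, hH] at h
    exact h
  have hpH : τ ^ p ∈ H := hiff2 p hper.1.2
  have hp0 : 0 < p := hper.1.1
  -- p divides any k with τ^k ∈ H
  have hdvd : ∀ k : ℕ, τ ^ k ∈ H → p ∣ k := by
    intro k hk
    have h1 : τ ^ (p * (k / p)) ∈ H := by
      rw [pow_mul]; exact H.pow_mem hpH _
    have h2 : τ ^ (p * (k / p)) * τ ^ (k % p) = τ ^ k := by
      rw [← pow_add, Nat.div_add_mod]
    have h3 : τ ^ (k % p) ∈ H := by
      have := H.mul_mem (H.inv_mem h1) hk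
      rwa [← h2, inv_mul_cancel_left] at this
    rcases Nat.eq_zero_or_pos (k % p) with h0 | hpos
    · exact Nat.dvd_of_mod_eq_zero h0
    · have hle : p ≤ k % p := hper.2 ⟨hpos, hiff1 _ h3⟩
      have hlt : k % p < p := Nat.mod_lt _ hp0
      omega
  have hpd : p ∣ 1 := by
    rw [← hgcd]
    refine Finset.dvd_gcd ?_
    intro b hb
    exact hdvd (orderOf b) (hτv b ((Set.Finite.mem_toFinset _).mp hb))
  exact Nat.dvd_one.mp hpd
end

section
/- Let N be a positive integer, let Σ be a nonempty subset of the symmetric group S_N with period 1, and let G := ⟨Σ⟩ be the finite subgroup generated by Σ. Let p : S_N → ℝ satisfy p(σ) > 0 for all σ ∈ Σ, p(σ) = 0 for σ ∉ Σ, and ∑_{σ ∈ Σ} p(σ) = 1, and define the transition matrix P indexed by G × G by P(g,h) = p(h g⁻¹). Then for all g, h ∈ G, the (g,h) entry of the matrix power P^n converges to 1/|G| as n → ∞. -/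
open Pointwise

attribute [local instance] Classical.propDecidable

/-- Theorem 4 (uniform limit): if Σ has period 1, the n-step transition probabilities of
the random walk on G = ⟨Σ⟩ with step distribution p supported on Σ converge to the
uniform distribution 1/|G|. -/
theorem stmt_15 (N : ℕ) (hN : 0 < N) (S : Set (Equiv.Perm (Fin N))) (hS : S.Nonempty)
    (s : ℕ)
    (hsig : IsLeast {m : ℕ | 0 < m ∧
      ∃ H : Subgroup (Equiv.Perm (Fin N)), S ^ m = (H : Set (Equiv.Perm (Fin N)))} s)
    (hper : IsLeast {q : ℕ | 0 < q ∧ S ^ (s + q) = S ^ s} 1)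
    (p : Equiv.Perm (Fin N) → ℝ)
    (hpos : ∀ σ ∈ S, 0 < p σ)
    (hzero : ∀ σ : Equiv.Perm (Fin N), σ ∉ S → p σ = 0)
    (hsum : ∑ σ ∈ (Set.toFinite S).toFinset, p σ = 1)
    (P : Matrix (Subgroup.closure S) (Subgroup.closure S) ℝ)
    (hP : ∀ g h : Subgroup.closure S,
      P g h = p ((h : Equiv.Perm (Fin N)) * (g : Equiv.Perm (Fin N))⁻¹)) :
    ∀ g h : Subgroup.closure S,
      Filter.Tendsto (fun n : ℕ => (P ^ n) g h) Filter.atTop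
        (nhds (1 / (Nat.card (Subgroup.closure S) : ℝ))) := by
  --------------------------------------------------------------------
  -- Part 1: group-theoretic facts.  S ^ s is the carrier of ⟨S⟩.
  --------------------------------------------------------------------
  obtain ⟨⟨hs_pos, H, hH⟩, -⟩ := hsig
  have hS1 : S ^ (s + 1) = S ^ s := hper.1.2
  have hSsub : S ⊆ ((Subgroup.closure S : Subgroup _) : Set _) := Subgroup.subset_closure
  have hSsubH : S ⊆ (H : Set _) := by
    intro σ hσ
    have h1 : (1 : Equiv.Perm (Fin N)) ∈ S ^ s := by rw [hH]; exact H.one_mem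
    have h2 : σ * 1 ∈ S * S ^ s := Set.mul_mem_mul hσ h1
    rw [mul_one] at h2
    have h3 : σ ∈ S ^ (s + 1) := by rwa [pow_succ']
    rw [hS1, hH] at h3
    exact h3
  have hpow_sub : ∀ n, S ^ n ⊆ ((Subgroup.closure S : Subgroup _) : Set _) := by
    intro n
    induction n with
    | zero =>
      intro x hx
      rw [pow_zero, Set.mem_one] at hx
      subst hx
      exact (Subgroup.closure S).one_mem
    | succ n ih =>
      intro x hx
      rw [pow_succ, Set.mem_mul] at hx
      obtain ⟨a, ha, b, hb, rfl⟩ := hx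
      exact mul_mem (ih ha) (Subgroup.subset_closure hb)
  have hGH : Subgroup.closure S = H := by
    apply le_antisymm ((Subgroup.closure_le H).2 hSsubH)
    intro x hx
    have : x ∈ S ^ s := by rw [hH]; exact hx
    exact hpow_sub s this
  have hSs : S ^ s = ((Subgroup.closure S : Subgroup _) : Set _) := by rw [hGH, hH]
  --------------------------------------------------------------------
  -- Part 2: basic facts about p and the matrix P.
  --------------------------------------------------------------------
  have hp0 : ∀ σ, 0 ≤ p σ := by
    intro σ
    by_cases hσ : σ ∈ S
    · exact (hpos σ hσ).le
    · rw [hzero σ hσ]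
  have hsumG : ∑ k : ↥(Subgroup.closure S), p ↑k = 1 := by
    rw [← hsum]
    have hinj : Function.Injective ((↑) : ↥(Subgroup.closure S) → Equiv.Perm (Fin N)) :=
      Subtype.coe_injective
    rw [← Finset.sum_image (f := p)
      (g := ((↑) : ↥(Subgroup.closure S) → Equiv.Perm (Fin N))) (fun x _ y _ h => hinj h)]
    symm
    apply Finset.sum_subset
    · intro σ hσ
      rw [Set.Finite.mem_toFinset] at hσ
      exact Finset.mem_image.2 ⟨⟨σ, hSsub hσ⟩, Finset.mem_univ _, rfl⟩
    · intro σ _ hσ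
      rw [Set.Finite.mem_toFinset] at hσ
      exact hzero σ hσ
  have hrow : ∀ g : ↥(Subgroup.closure S), ∑ h, P g h = 1 := by
    intro g
    rw [← hsumG]
    exact Fintype.sum_equiv (Equiv.mulRight g⁻¹) _ _ (fun h => by rw [hP]; rfl)
  have hcol : ∀ h : ↥(Subgroup.closure S), ∑ g, P g h = 1 := by
    intro h
    rw [← hsumG]
    exact Fintype.sum_equiv ((Equiv.inv _).trans (Equiv.mulLeft h)) _ _
      (fun g => by rw [hP]; rfl)
  --------------------------------------------------------------------
  -- Part 3: entries of powers of P.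
  --------------------------------------------------------------------
  have hPnn : ∀ n (g h : ↥(Subgroup.closure S)), 0 ≤ (P ^ n) g h := by
    intro n
    induction n with
    | zero =>
      intro g h
      rw [pow_zero, Matrix.one_apply]
      split <;> norm_num
    | succ n ih =>
      intro g h
      rw [pow_succ, Matrix.mul_apply]
      exact Finset.sum_nonneg fun k _ => mul_nonneg (ih g k) (by rw [hP]; exact hp0 _)
  have hinv : ∀ n (g h k : ↥(Subgroup.closure S)), (P ^ n) (g * k) (h * k) = (P ^ n) g h := by
    intro n
    induction n with
    | zero =>
      intro g h k
      rw [pow_zero, Matrix.one_apply, Matrix.one_apply]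
      congr 1
      simp [mul_left_inj]
    | succ n ih =>
      intro g h k
      rw [pow_succ, Matrix.mul_apply, Matrix.mul_apply]
      refine Fintype.sum_equiv (Equiv.mulRight k⁻¹) _ _ fun j => ?_
      have h1 : P (j * k⁻¹ * k) (h * k) = P (j * k⁻¹) h := by
        rw [hP, hP]
        congr 1
        push_cast
        group
      have h2 : (P ^ n) (g * k) (j * k⁻¹ * k) = (P ^ n) g (j * k⁻¹) := ih g (j * k⁻¹) k
      rw [inv_mul_cancel_right] at h1 h2
      rw [Equiv.coe_mulRight, h2, h1]
  have hrown : ∀ n (g : ↥(Subgroup.closure S)), ∑ h, (P ^ n) g h = 1 := by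
    intro n
    induction n with
    | zero => intro g; simp [Matrix.one_apply]
    | succ n ih =>
      intro g
      simp only [pow_succ, Matrix.mul_apply]
      rw [Finset.sum_comm]
      calc ∑ k, ∑ h, (P ^ n) g k * P k h = ∑ k, (P ^ n) g k * ∑ h, P k h := by
            simp [Finset.mul_sum]
        _ = 1 := by simp only [hrow, mul_one]; exact ih g
  --------------------------------------------------------------------
  -- Part 4: the convolution powers q n.
  --------------------------------------------------------------------
  set q : ℕ → ↥(Subgroup.closure S) → ℝ := fun n x => (P ^ n) 1 x with hqdef
  have hq : ∀ n (g h : ↥(Subgroup.closure S)), (P ^ n) g h = q n (h * g⁻¹) := by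
    intro n g h
    have := hinv n 1 (h * g⁻¹) g
    rw [one_mul, inv_mul_cancel_right] at this
    simp only [hqdef]
    exact this
  have hqnn : ∀ n x, 0 ≤ q n x := fun n x => hPnn n 1 x
  have hqsum : ∀ n, ∑ x, q n x = 1 := fun n => hrown n 1
  have hconv : ∀ m n (x : ↥(Subgroup.closure S)),
      q (m + n) x = ∑ k, q m k * q n (x * k⁻¹) := by
    intro m n x
    have : (P ^ (m + n)) 1 x = ∑ k, (P ^ m) 1 k * (P ^ n) k x := by
      rw [pow_add, Matrix.mul_apply]
    rw [hqdef]
    simp only [this]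
    refine Finset.sum_congr rfl fun k _ => ?_
    rw [hq n k x]
  have hqcol : ∀ n (x : ↥(Subgroup.closure S)), ∑ k, q n (x * k⁻¹) = 1 := by
    intro n x
    rw [← hqsum n]
    exact Fintype.sum_equiv ((Equiv.inv _).trans (Equiv.mulLeft x)) _ _ (fun k => rfl)
  have hqpos : ∀ n (σ : Equiv.Perm (Fin N)) (hσ : σ ∈ S ^ n) (hm : σ ∈ Subgroup.closure S),
      0 < q n ⟨σ, hm⟩ := by
    intro n
    induction n with
    | zero =>
      intro σ hσ hm
      rw [pow_zero, Set.mem_one] at hσ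
      subst hσ
      have : (⟨1, hm⟩ : ↥(Subgroup.closure S)) = 1 := rfl
      rw [this, hqdef]
      simp [Matrix.one_apply]
    | succ n ih =>
      intro σ hσ hm
      rw [pow_succ', Set.mem_mul] at hσ
      obtain ⟨a, ha, b, hb, rfl⟩ := hσ
      have hbm : b ∈ Subgroup.closure S := hpow_sub n hb
      have ham : a ∈ Subgroup.closure S := hSsub ha
      have hc : q (n + 1) ⟨a * b, hm⟩ = ∑ k, q n k * q 1 (⟨a * b, hm⟩ * k⁻¹) := hconv n 1 _
      rw [hc]
      apply Finset.sum_pos'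
      · intro k _
        exact mul_nonneg (hqnn n k) (hqnn 1 _)
      · refine ⟨⟨b, hbm⟩, Finset.mem_univ _, ?_⟩
        apply mul_pos (ih b hb hbm)
        have hxk : (⟨a * b, hm⟩ : ↥(Subgroup.closure S)) * (⟨b, hbm⟩ : ↥(Subgroup.closure S))⁻¹
            = ⟨a, ham⟩ := by
          apply Subtype.ext
          push_cast
          exact mul_inv_cancel_right a b
        rw [hxk]
        have h1 : q 1 ⟨a, ham⟩ = p a := by
          rw [hqdef]
          simp only [pow_one]
          rw [hP]
          simp
        rw [h1]
        exact hpos a ha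
  have hqspos : ∀ x : ↥(Subgroup.closure S), 0 < q s x := by
    intro x
    have hx : (x : Equiv.Perm (Fin N)) ∈ S ^ s := by rw [hSs]; exact x.2
    have := hqpos s x hx x.2
    simpa using this
  --------------------------------------------------------------------
  -- Part 5: the Doeblin contraction argument and the limit.
  --------------------------------------------------------------------
  intro g h
  have hne : (Finset.univ : Finset ↥(Subgroup.closure S)).Nonempty := Finset.univ_nonempty
  set c : ℝ := (Fintype.card ↥(Subgroup.closure S) : ℝ) with hc
  have hcpos : 0 < c := by
    rw [hc]
    exact_mod_cast Fintype.card_pos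
  have hNatc : ((Nat.card ↥(Subgroup.closure S) : ℝ)) = c := by
    rw [hc, Nat.card_eq_fintype_card]
  set u : ℝ := 1 / (Nat.card ↥(Subgroup.closure S) : ℝ) with hu
  have hu' : u = 1 / c := by rw [hu, hNatc]
  have husum : ∑ _x : ↥(Subgroup.closure S), u = 1 := by
    rw [Finset.sum_const, Finset.card_univ, nsmul_eq_mul, hu', ← hc]
    field_simp
  have hu0 : 0 ≤ u := by rw [hu']; positivity
  have hu1 : u ≤ 1 := by
    rw [hu']
    rw [div_le_one hcpos]
    rw [hc]
    exact_mod_cast Fintype.card_pos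
  have hqle1 : ∀ n x, q n x ≤ 1 := by
    intro n x
    rw [← hqsum n]
    exact Finset.single_le_sum (fun y _ => hqnn n y) (Finset.mem_univ x)
  set ε : ℝ := Finset.univ.inf' hne (fun x => q s x) with hεdef
  have hε : 0 < ε := by
    rw [hεdef, Finset.lt_inf'_iff]
    exact fun x _ => hqspos x
  have hεle : ∀ x, ε ≤ q s x := fun x => by
    rw [hεdef]; exact Finset.inf'_le _ (Finset.mem_univ x)
  set t : ℝ := 1 - c * ε with ht
  have ht0 : 0 ≤ t := by
    have : c * ε ≤ 1 := by
      calc c * ε = ∑ _x : ↥(Subgroup.closure S), ε := by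
            rw [Finset.sum_const, Finset.card_univ, nsmul_eq_mul, hc]
        _ ≤ ∑ x, q s x := Finset.sum_le_sum fun x _ => hεle x
        _ = 1 := hqsum s
    linarith
  have ht1 : t < 1 := by
    have : 0 < c * ε := mul_pos hcpos hε
    rw [ht]; linarith
  set D : ℕ → ℝ := fun n => Finset.univ.sup' hne (fun x => |q n x - u|) with hD
  have hDle : ∀ n x, |q n x - u| ≤ D n := fun n x => by
    rw [hD]; exact Finset.le_sup' (fun y => |q n y - u|) (Finset.mem_univ x)
  have hDnn : ∀ n, 0 ≤ D n := fun n => le_trans (abs_nonneg _) (hDle n 1)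
  have hD1 : ∀ n, D n ≤ 1 := by
    intro n
    rw [hD]
    apply Finset.sup'_le
    intro x _
    rw [abs_sub_le_iff]
    constructor
    · have := hqle1 n x; linarith
    · have := hqnn n x; linarith
  have hDgen : ∀ n m (δ : ℝ), 0 ≤ δ → (∀ y, δ ≤ q m y) → D (n + m) ≤ (1 - c * δ) * D n := by
    intro n m δ hδ0 hδle
    have hcδ : c * δ ≤ 1 := by
      calc c * δ = ∑ _x : ↥(Subgroup.closure S), δ := by
            rw [Finset.sum_const, Finset.card_univ, nsmul_eq_mul, hc]
        _ ≤ ∑ x, q m x := Finset.sum_le_sum fun x _ => hδle x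
        _ = 1 := hqsum m
    rw [hD]
    apply Finset.sup'_le
    intro x _
    have hcu : c * u = 1 := by
      rw [← husum, Finset.sum_const, Finset.card_univ, nsmul_eq_mul, hc]
    have e1 : q (n + m) x - u = ∑ k, (q n k - u) * (q m (x * k⁻¹) - δ) := by
      have expand : ∀ k : ↥(Subgroup.closure S), (q n k - u) * (q m (x * k⁻¹) - δ)
          = q n k * q m (x * k⁻¹) - u * q m (x * k⁻¹) - δ * q n k + δ * u := fun k => by ring
      rw [Finset.sum_congr rfl (fun k _ => expand k), Finset.sum_add_distrib,
        Finset.sum_sub_distrib, Finset.sum_sub_distrib, ← Finset.mul_sum, ← Finset.mul_sum,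
        hqcol m x, hqsum n, Finset.sum_const, Finset.card_univ, nsmul_eq_mul, ← hc,
        ← hconv n m x]
      linear_combination -δ * hcu
    calc |q (n + m) x - u| = |∑ k, (q n k - u) * (q m (x * k⁻¹) - δ)| := by rw [e1]
      _ ≤ ∑ k, |(q n k - u) * (q m (x * k⁻¹) - δ)| := Finset.abs_sum_le_sum_abs _ _
      _ ≤ ∑ k, D n * (q m (x * k⁻¹) - δ) := by
          apply Finset.sum_le_sum
          intro k _
          have h2 : |q m (x * k⁻¹) - δ| = q m (x * k⁻¹) - δ :=
            abs_of_nonneg (by have := hδle (x * k⁻¹); linarith)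
          rw [abs_mul, h2]
          exact mul_le_mul_of_nonneg_right (hDle n k)
            (by have := hδle (x * k⁻¹); linarith)
      _ = D n * (1 - c * δ) := by
          rw [← Finset.mul_sum, Finset.sum_sub_distrib, hqcol m x, Finset.sum_const,
            Finset.card_univ, nsmul_eq_mul, ← hc]
      _ = (1 - c * δ) * D n := by ring
  have hDadd : ∀ n m, D (n + m) ≤ D n := by
    intro n m
    have := hDgen n m 0 le_rfl (fun y => hqnn m y)
    simpa using this
  have hDanti : ∀ a b, a ≤ b → D b ≤ D a := by
    intro a b hab
    obtain ⟨k, rfl⟩ := Nat.exists_eq_add_of_le hab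
    exact hDadd a k
  have hDs : ∀ n, D (n + s) ≤ t * D n := fun n => hDgen n s ε hε.le hεle
  have hDk : ∀ k, D (k * s) ≤ t ^ k := by
    intro k
    induction k with
    | zero => simpa using hD1 0
    | succ k ih =>
      calc D ((k + 1) * s) = D (k * s + s) := by rw [Nat.succ_mul]
        _ ≤ t * D (k * s) := hDs (k * s)
        _ ≤ t * t ^ k := mul_le_mul_of_nonneg_left ih ht0
        _ = t ^ (k + 1) := by ring
  have hDn : ∀ n, D n ≤ t ^ (n / s) := by
    intro n
    calc D n ≤ D (n / s * s) := hDanti _ _ (Nat.div_mul_le_self n s)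
      _ ≤ t ^ (n / s) := hDk _
  have hb : ∀ n, |(P ^ n) g h - u| ≤ t ^ (n / s) := by
    intro n
    rw [hq n g h]
    exact le_trans (hDle n _) (hDn n)
  have hdiv : Filter.Tendsto (fun n : ℕ => n / s) Filter.atTop Filter.atTop := by
    apply Filter.tendsto_atTop_atTop.2
    intro b
    exact ⟨b * s, fun n hn => (Nat.le_div_iff_mul_le hs_pos).2 hn⟩
  have hgeo : Filter.Tendsto (fun n : ℕ => t ^ (n / s)) Filter.atTop (nhds 0) :=
    (tendsto_pow_atTop_nhds_zero_of_lt_one ht0 ht1).comp hdiv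
  have habs : Filter.Tendsto (fun n : ℕ => |(P ^ n) g h - u|) Filter.atTop (nhds 0) :=
    squeeze_zero (fun n => abs_nonneg _) hb hgeo
  exact tendsto_iff_norm_sub_tendsto_zero.2 (by simpa [Real.norm_eq_abs] using habs)
end

section
/- In the symmetric group S_4, let Σ := {(1 2 3), (2 3 4)} consist of the two 3-cycles. Then Σ has period 1 and the subgroup generated by Σ is the alternating group A_4, even though every element of Σ has order 3 (so gcd of the element orders is 3, showing the gcd-of-orders condition is sufficient but not necessary for period 1). -/
open Pointwise

private def Fset : Finset (Equiv.Perm (Fin 4)) :=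
  {Equiv.swap 0 1 * Equiv.swap 1 2, Equiv.swap 1 2 * Equiv.swap 2 3}

private lemma not_group (m : ℕ)
    (hne : ¬ ∀ x ∈ Fset ^ m, ∀ y ∈ Fset ^ m, x * y ∈ Fset ^ m)
    (H : Subgroup (Equiv.Perm (Fin 4)))
    (hH : (↑Fset : Set (Equiv.Perm (Fin 4))) ^ m = ↑H) : False := by
  rw [← Finset.coe_pow] at hH
  apply hne
  intro x hx y hy
  have hx' : x ∈ H := by rw [← SetLike.mem_coe, ← hH]; exact_mod_cast hx
  have hy' : y ∈ H := by rw [← SetLike.mem_coe, ← hH]; exact_mod_cast hy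
  have : x * y ∈ H := H.mul_mem hx' hy'
  have : x * y ∈ (↑(Fset ^ m) : Set (Equiv.Perm (Fin 4))) := by rw [hH]; exact this
  exact_mod_cast this

private lemma pow_sub_closure (S : Set (Equiv.Perm (Fin 4))) :
    ∀ n, S ^ (n + 1) ⊆ ↑(Subgroup.closure S) := by
  intro n
  induction n with
  | zero => rw [zero_add, pow_one]; exact Subgroup.subset_closure
  | succ k ih =>
    rw [pow_succ]
    rintro x ⟨a, ha, b, hb, rfl⟩
    exact Subgroup.mul_mem _ (ih ha) (Subgroup.subset_closure hb)

/-- In S_4, Σ = {(1 2 3), (2 3 4)} (0-indexed: the 3-cycles 0↦1↦2↦0 and 1↦2↦3↦1) has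
period 1 and generates the alternating group A_4, even though both of its elements have
order 3. -/
theorem stmt_16 (σ τ : Equiv.Perm (Fin 4))
    (hσ : σ = Equiv.swap 0 1 * Equiv.swap 1 2)
    (hτ : τ = Equiv.swap 1 2 * Equiv.swap 2 3)
    (S : Set (Equiv.Perm (Fin 4))) (hS : S = {σ, τ}) :
    (∃ s : ℕ, IsLeast {m : ℕ | 0 < m ∧
        ∃ H : Subgroup (Equiv.Perm (Fin 4)), S ^ m = (H : Set (Equiv.Perm (Fin 4)))} s ∧
      IsLeast {q : ℕ | 0 < q ∧ S ^ (s + q) = S ^ s} 1) ∧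
    Subgroup.closure S = alternatingGroup (Fin 4) ∧
    ∀ π ∈ S, orderOf π = 3 := by
  subst hσ hτ hS
  have hSF : ({Equiv.swap 0 1 * Equiv.swap 1 2, Equiv.swap 1 2 * Equiv.swap 2 3} :
      Set (Equiv.Perm (Fin 4))) = ↑Fset := by
    simp [Fset]
  have h6 : (↑Fset : Set (Equiv.Perm (Fin 4))) ^ 6 = ↑(alternatingGroup (Fin 4)) := by
    rw [← Finset.coe_pow]
    ext x
    have h := (by decide : ∀ x : Equiv.Perm (Fin 4),
      x ∈ Fset ^ 6 ↔ Equiv.Perm.sign x = 1) x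
    simp only [Finset.mem_coe, SetLike.mem_coe, Equiv.Perm.mem_alternatingGroup]
    exact h
  rw [hSF]
  refine ⟨⟨6, ⟨⟨by norm_num, alternatingGroup (Fin 4), h6⟩, ?_⟩, ⟨⟨one_pos, ?_⟩, ?_⟩⟩, ?_, ?_⟩
  · -- lower bound for s
    rintro m ⟨hm, H, hH⟩
    by_contra hlt
    push_neg at hlt
    interval_cases m <;>
      exact not_group _ (by decide) H hH
  · -- S^7 = S^6
    rw [← Finset.coe_pow, ← Finset.coe_pow]
    norm_cast
  · rintro q ⟨hq, -⟩
    exact hq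
  · -- closure = A4
    apply le_antisymm
    · rw [Subgroup.closure_le]
      rw [hSF] at *
      intro x hx
      have : x ∈ Fset := by exact_mod_cast hx
      have hsign : Equiv.Perm.sign x = 1 := by
        revert this; revert x; decide
      simpa [Equiv.Perm.mem_alternatingGroup] using hsign
    · intro x hx
      have hx6 : x ∈ (↑Fset : Set (Equiv.Perm (Fin 4))) ^ 6 := by
        rw [h6]; exact hx
      exact pow_sub_closure _ 5 hx6
  · haveI : Fact (Nat.Prime 3) := ⟨by norm_num⟩
    intro π hπ
    have hm : π ∈ Fset := by exact_mod_cast hπ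
    fin_cases hm <;> exact orderOf_eq_prime (by decide) (by decide)
end
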